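/- Let f : S → E be a strictly increasing function from a set of epsilon numbers into the epsilon numbers, and let y be an ordinal with Ep(y) ⊆ S. Then y is additively principal if and only if y[f] is additively principal. -/

import Mathlib

/-!
Write `y = ω ^ a * c + r` with `a = log ω y`, `0 < c < ω` and `r < ω ^ a`; then
`y[f] = ω ^ a[f] * c + r[f]`. The substitution is strictly increasing on ordinals whose epsilon
numbers lie in `S`: by induction on the larger argument `y`, comparing leading terms, except when
`y` is itself an epsilon number, where `y[f] = f y` is closed under everything that builds `x[f]`
for `x < y`. Consequently `r < ω ^ a` gives `r[f] < ω ^ a[f]`, so the displayed form of `y[f]` is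
again its Cantor normal form, and `y[f]` is a power of `ω` exactly when `c = 1` and `r = 0`,
that is, exactly when `y` is.
-/

open Ordinal

/-- An ordinal is an epsilon number if it is a fixed point of `ω ^ ·`. -/
def IsEpsilon (x : Ordinal.{0}) : Prop := ω ^ x = x

theorem cnf_fst_lt {x : Ordinal.{0}} (h : ¬ ω ^ x = x) {p : Ordinal × Ordinal}
    (hp : p ∈ CNF ω x) : p.1 < x := by
  have hx : x ≠ 0 := by
    rintro rfl
    simp [Ordinal.CNF.zero_right] at hp
  have h1 : p.1 ≤ Ordinal.log ω x := Ordinal.CNF.fst_le_log hp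
  have h2 : Ordinal.log ω x < x := by
    rcases lt_or_eq_of_le (Ordinal.log_le_self ω x) with h' | h'
    · exact h'
    · exfalso
      have hle := Ordinal.opow_log_le_self ω hx
      rw [h'] at hle
      exact h (le_antisymm hle (Ordinal.right_le_opow x one_lt_omega0))
  exact lt_of_le_of_lt h1 h2

open scoped Classical in
/-- The set of epsilon numbers occurring hereditarily in the Cantor normal form of `x`. -/
noncomputable def Ep (x : Ordinal.{0}) : Set Ordinal.{0} :=
  if h : ω ^ x = x then {x}
  else ⋃ p : {q // q ∈ CNF ω x}, Ep p.1.1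
termination_by x
decreasing_by exact cnf_fst_lt h p.2

open scoped Classical in
/-- Simultaneous substitution of the epsilon numbers occurring hereditarily in the
Cantor normal form of `x` by their values under `f`. -/
noncomputable def subst (f : Ordinal.{0} → Ordinal.{0}) (x : Ordinal.{0}) : Ordinal.{0} :=
  if h : ω ^ x = x then f x
  else (((CNF ω x).attach).map (fun p => ω ^ subst f p.1.1 * p.1.2)).sum
termination_by x
decreasing_by exact cnf_fst_lt h p.2

theorem IsEpsilon.opow_eq {x : Ordinal.{0}} (h : IsEpsilon x) : ω ^ x = x := h

theorem IsEpsilon.ne_zero {x : Ordinal.{0}} (h : IsEpsilon x) : x ≠ 0 := by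
  rintro rfl
  simp [IsEpsilon] at h

theorem IsEpsilon.log_omega0_eq {x : Ordinal.{0}} (h : IsEpsilon x) : log ω x = x := by
  conv_lhs => rw [← h.opow_eq]
  exact log_opow one_lt_omega0 x

theorem IsEpsilon.CNF_eq {x : Ordinal.{0}} (h : IsEpsilon x) : CNF ω x = [(x, 1)] := by
  rw [CNF.ne_zero h.ne_zero, h.log_omega0_eq, h.opow_eq, div_self h.ne_zero, mod_self,
    CNF.zero_right]

theorem log_omega0_lt_self {x : Ordinal.{0}} (h : ¬ IsEpsilon x) (hx : x ≠ 0) : log ω x < x :=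
  (log_le_self ω x).lt_of_ne fun hlog =>
    h ((hlog ▸ opow_log_le_self ω hx).antisymm (right_le_opow x one_lt_omega0))

theorem pos_and_isPrincipal_add_iff {y : Ordinal.{u}} :
    (0 < y ∧ IsPrincipal (· + ·) y) ↔ ∃ a : Ordinal.{u}, ω ^ a = y := by
  rw [isPrincipal_add_iff_zero_or_omega0_opow]
  constructor
  · rintro ⟨hy, rfl | h⟩
    exacts [absurd hy (lt_irrefl 0), h]
  · rintro ⟨a, rfl⟩
    exact ⟨opow_pos a omega0_pos, Or.inr ⟨a, rfl⟩⟩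

theorem eq_one_and_eq_zero_of_opow_mul_add_eq_opow {A c R ξ : Ordinal.{u}} (hc0 : c ≠ 0)
    (hcω : c < ω) (hR : R < ω ^ A) (h : ω ^ A * c + R = ω ^ ξ) : c = 1 ∧ R = 0 := by
  have hξ : ξ = A := by
    have hlog := log_opow_mul_add one_lt_omega0 hc0 hR
    rwa [h, log_opow one_lt_omega0, log_eq_zero hcω, add_zero] at hlog
  subst hξ
  have hA : ω ^ ξ ≠ 0 := opow_ne_zero _ omega0_ne_zero
  have hc : c = 1 := by
    simpa [mul_add_div _ hA, div_eq_zero_of_lt hR, div_self hA] using congrArg (· / ω ^ ξ) h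
  subst hc
  exact ⟨rfl, by simpa using h⟩

theorem Ep_of_isEpsilon {x : Ordinal.{0}} (h : IsEpsilon x) : Ep x = {x} := by
  rw [Ep]
  exact dif_pos h

theorem Ep_of_not_isEpsilon {x : Ordinal.{0}} (h : ¬ IsEpsilon x) :
    Ep x = ⋃ p : {q // q ∈ CNF ω x}, Ep p.1.1 := by
  rw [Ep]
  exact dif_neg h

theorem Ep_zero : Ep 0 = ∅ := by
  rw [Ep, dif_neg (by simp), CNF.zero_right]
  exact Set.iUnion_eq_empty.2 fun p => absurd p.2 List.not_mem_nil

theorem Ep_subset_of_mem_CNF {x : Ordinal.{0}} (h : ¬ IsEpsilon x) {p : Ordinal × Ordinal}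
    (hp : p ∈ CNF ω x) : Ep p.1 ⊆ Ep x := by
  rw [Ep_of_not_isEpsilon h]
  exact Set.subset_iUnion (fun q : {q // q ∈ CNF ω x} => Ep q.1.1) ⟨p, hp⟩

theorem Ep_subset_of_CNF_subset {r x : Ordinal.{0}} (hx : ¬ IsEpsilon x)
    (h : ∀ q ∈ CNF ω r, q ∈ CNF ω x) : Ep r ⊆ Ep x := by
  by_cases hr : IsEpsilon r
  · exact Ep_subset_of_mem_CNF hx (p := (r, 1)) (h _ (by simp [hr.CNF_eq]))
  · rw [Ep_of_not_isEpsilon hr]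
    exact Set.iUnion_subset fun q => Ep_subset_of_mem_CNF hx (h _ q.2)

theorem Ep_log_subset {x : Ordinal.{0}} (hx : x ≠ 0) : Ep (log ω x) ⊆ Ep x := by
  by_cases h : IsEpsilon x
  · rw [h.log_omega0_eq]
  · exact Ep_subset_of_mem_CNF h (by rw [CNF.ne_zero hx]; exact List.mem_cons_self)

theorem Ep_mod_subset (x : Ordinal.{0}) : Ep (x % ω ^ log ω x) ⊆ Ep x := by
  by_cases h : IsEpsilon x
  · rw [h.log_omega0_eq, h.opow_eq, mod_self, Ep_zero]
    exact Set.empty_subset _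
  · rcases eq_or_ne x 0 with rfl | hx
    · simp
    · exact Ep_subset_of_CNF_subset h fun q hq => by
        rw [CNF.ne_zero hx]
        exact List.mem_cons_of_mem _ hq

variable {S : Set Ordinal.{0}} {f : Ordinal → Ordinal}

theorem subst_of_isEpsilon {x : Ordinal.{0}} (h : IsEpsilon x) : subst f x = f x := by
  rw [subst]
  exact dif_pos h

theorem subst_zero : subst f 0 = 0 := by
  rw [subst, dif_neg (by simp), CNF.zero_right]
  rfl

section
variable (hfE : ∀ e ∈ S, IsEpsilon (f e))
include hfE

theorem subst_eq_sum {x : Ordinal.{0}} (hx : Ep x ⊆ S) :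
    subst f x = ((CNF ω x).map fun p => ω ^ subst f p.1 * p.2).sum := by
  by_cases h : IsEpsilon x
  · rw [h.CNF_eq, subst_of_isEpsilon h]
    simpa [subst_of_isEpsilon h] using (hfE x (hx (by rw [Ep_of_isEpsilon h]; rfl))).symm
  · rw [subst]
    exact (dif_neg h).trans <| congrArg List.sum
      (List.attach_map_val (f := fun p : Ordinal × Ordinal => ω ^ subst f p.1 * p.2))

theorem subst_eq_opow_mul_add {x : Ordinal.{0}} (hx0 : x ≠ 0) (hx : Ep x ⊆ S) :
    subst f x = ω ^ subst f (log ω x) * (x / ω ^ log ω x) + subst f (x % ω ^ log ω x) := by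
  rw [subst_eq_sum hfE hx, CNF.ne_zero hx0, List.map_cons, List.sum_cons,
    ← subst_eq_sum hfE ((Ep_mod_subset x).trans hx)]

theorem opow_subst_log_le_subst {x : Ordinal.{0}} (hx0 : x ≠ 0) (hx : Ep x ⊆ S) :
    ω ^ subst f (log ω x) ≤ subst f x := by
  rw [subst_eq_opow_mul_add hfE hx0 hx]
  exact (le_mul_left _ (div_opow_log_pos ω hx0)).trans le_self_add

theorem subst_pos {x : Ordinal.{0}} (hx0 : x ≠ 0) (hx : Ep x ⊆ S) : 0 < subst f x :=
  (opow_pos _ omega0_pos).trans_le (opow_subst_log_le_subst hfE hx0 hx)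

theorem subst_opow {a : Ordinal.{0}} (ha : Ep (ω ^ a) ⊆ S) :
    subst f (ω ^ a) = ω ^ subst f a := by
  have hne : (ω : Ordinal) ^ a ≠ 0 := opow_ne_zero _ omega0_ne_zero
  rw [subst_eq_opow_mul_add hfE hne ha, log_opow one_lt_omega0, div_self hne, mod_self,
    mul_one, subst_zero, add_zero]

-- Only comparisons below `a` are assumed, so that the monotonicity proof can use this inductively.
theorem subst_lt_opow_of_strictMonoOn {a r : Ordinal.{0}}
    (hmono : StrictMonoOn (subst f) ({u | Ep u ⊆ S} ∩ Set.Iic a))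
    (ha : Ep a ⊆ S) (hr : Ep r ⊆ S) (hra : r < ω ^ a) : subst f r < ω ^ subst f a := by
  induction r using WellFoundedLT.induction generalizing a with
  | ind r IH =>
  rcases eq_or_ne r 0 with rfl | hr0
  · rw [subst_zero]
    exact opow_pos _ omega0_pos
  have hlog : log ω r < a := (lt_opow_iff_log_lt one_lt_omega0 hr0).1 hra
  have hElog : Ep (log ω r) ⊆ S := (Ep_log_subset hr0).trans hr
  have hmod : subst f (r % ω ^ log ω r) < ω ^ subst f (log ω r) :=
    IH _ (mod_opow_log_lt_self ω hr0)
      (hmono.mono (Set.inter_subset_inter_right _ (Set.Iic_subset_Iic.2 hlog.le))) hElog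
      ((Ep_mod_subset r).trans hr) (mod_lt _ (opow_ne_zero _ omega0_ne_zero))
  rw [subst_eq_opow_mul_add hfE hr0 hr]
  exact opow_mul_add_lt_opow (div_opow_log_lt r one_lt_omega0) hmod
    (hmono ⟨hElog, hlog.le⟩ ⟨ha, Set.mem_Iic.2 le_rfl⟩ hlog)

variable (hf : StrictMonoOn f S)
include hf

theorem subst_lt_of_lt_mem {e x : Ordinal.{0}} (he : e ∈ S) (hxe : x < e) (hx : Ep x ⊆ S) :
    subst f x < f e := by
  induction x using WellFoundedLT.induction with
  | ind x IH =>
  have hfe : ω ^ f e = f e := hfE e he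
  rcases eq_or_ne x 0 with rfl | hx0
  · rw [subst_zero]
    exact (hfE e he).ne_zero.bot_lt
  by_cases h : IsEpsilon x
  · rw [subst_of_isEpsilon h]
    exact hf (hx (by rw [Ep_of_isEpsilon h]; rfl)) he hxe
  have hlog := log_omega0_lt_self h hx0
  have hmod := mod_opow_log_lt_self ω hx0
  have hlead : ω ^ subst f (log ω x) * (x / ω ^ log ω x) < f e := hfe ▸
    opow_mul_lt_opow (div_opow_log_lt x one_lt_omega0)
      (IH _ hlog (hlog.trans hxe) ((Ep_log_subset hx0).trans hx))
  rw [subst_eq_opow_mul_add hfE hx0 hx]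
  exact (hfe ▸ isPrincipal_add_omega0_opow (f e)) hlead
    (IH _ hmod (hmod.trans hxe) ((Ep_mod_subset x).trans hx))

theorem strictMonoOn_subst : StrictMonoOn (subst f) {x | Ep x ⊆ S} := by
  intro x hx y hy hxy
  induction y using WellFoundedLT.induction generalizing x with
  | ind y IH =>
  by_cases h : IsEpsilon y
  · rw [subst_of_isEpsilon h]
    exact subst_lt_of_lt_mem hfE hf (hy (by rw [Ep_of_isEpsilon h]; rfl)) hxy hx
  have hy0 : y ≠ 0 := hxy.ne_bot
  set a := log ω y
  have ha : Ep a ⊆ S := (Ep_log_subset hy0).trans hy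
  have hmono : StrictMonoOn (subst f) ({u | Ep u ⊆ S} ∩ Set.Iic a) := fun u hu v hv huv =>
    IH v (hv.2.trans_lt (log_omega0_lt_self h hy0)) hu.1 hv.1 huv
  have hdecy := subst_eq_opow_mul_add hfE hy0 hy
  rcases eq_or_ne x 0 with rfl | hx0
  · rw [subst_zero]
    exact subst_pos hfE hy0 hy
  have hloga : log ω x ≤ a := log_mono_right ω hxy.le
  rcases hloga.lt_or_eq with hlt | heq
  · calc subst f x < ω ^ subst f a :=
          subst_lt_opow_of_strictMonoOn hfE hmono ha hx (lt_opow_of_log_lt one_lt_omega0 hlt)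
      _ ≤ subst f y := opow_subst_log_le_subst hfE hy0 hy
  have hdecx := subst_eq_opow_mul_add hfE hx0 hx
  rw [heq] at hdecx
  have hcoef : x / ω ^ a ≤ y / ω ^ a := div_le_left hxy.le _
  rcases hcoef.lt_or_eq with hlt | hc
  · have hmod : subst f (x % ω ^ a) < ω ^ subst f a :=
      subst_lt_opow_of_strictMonoOn hfE hmono ha ((heq ▸ Ep_mod_subset x).trans hx)
        (mod_lt _ (opow_ne_zero _ omega0_ne_zero))
    calc subst f x < ω ^ subst f a * (y / ω ^ a) := hdecx ▸ opow_mul_add_lt_opow_mul hmod hlt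
      _ ≤ subst f y := hdecy ▸ le_self_add
  · have hmod : x % ω ^ a < y % ω ^ a := by
      rwa [← div_add_mod x (ω ^ a), ← div_add_mod y (ω ^ a), hc, add_lt_add_iff_left] at hxy
    rw [hdecx, hdecy, hc]
    exact (add_lt_add_iff_left _).2 (IH _ (mod_opow_log_lt_self ω hy0)
      ((heq ▸ Ep_mod_subset x).trans hx) ((Ep_mod_subset y).trans hy) hmod)

theorem eq_opow_log_of_subst_eq_opow {y ξ : Ordinal.{0}} (hy : Ep y ⊆ S)
    (h : subst f y = ω ^ ξ) : y = ω ^ log ω y := by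
  have hy0 : y ≠ 0 := by
    rintro rfl
    exact opow_ne_zero ξ omega0_ne_zero (subst_zero.symm.trans h).symm
  have hmod : subst f (y % ω ^ log ω y) < ω ^ subst f (log ω y) :=
    subst_lt_opow_of_strictMonoOn hfE ((strictMonoOn_subst hfE hf).mono Set.inter_subset_left)
      ((Ep_log_subset hy0).trans hy) ((Ep_mod_subset y).trans hy)
      (mod_lt _ (opow_ne_zero _ omega0_ne_zero))
  rw [subst_eq_opow_mul_add hfE hy0 hy] at h
  obtain ⟨hcoef, hsubst⟩ := eq_one_and_eq_zero_of_opow_mul_add_eq_opow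
    (div_opow_log_pos ω hy0).ne' (div_opow_log_lt y one_lt_omega0) hmod h
  have hrem : y % ω ^ log ω y = 0 := by
    by_contra hne
    exact (subst_pos hfE hne ((Ep_mod_subset y).trans hy)).ne' hsubst
  conv_lhs => rw [← div_add_mod y (ω ^ log ω y), hcoef, hrem, mul_one, add_zero]

end

theorem stmt1_general (S : Set Ordinal.{0}) (f : Ordinal → Ordinal)
    (hfE : ∀ e ∈ S, IsEpsilon (f e))
    (hf : StrictMonoOn f S)
    (y : Ordinal) (hy : Ep y ⊆ S) :
    (0 < y ∧ Ordinal.Principal (· + ·) y) ↔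
      (0 < subst f y ∧ Ordinal.Principal (· + ·) (subst f y)) := by
  refine pos_and_isPrincipal_add_iff.trans (Iff.trans ?_ pos_and_isPrincipal_add_iff.symm)
  constructor
  · rintro ⟨a, rfl⟩
    exact ⟨subst f a, (subst_opow hfE hy).symm⟩
  · rintro ⟨ξ, hξ⟩
    exact ⟨log ω y, (eq_opow_log_of_subst_eq_opow hfE hf hy hξ.symm).symm⟩

theorem stmt1 (S : Set Ordinal.{0}) (f : Ordinal → Ordinal)
    (hS : ∀ e ∈ S, IsEpsilon e) (hfE : ∀ e ∈ S, IsEpsilon (f e))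
    (hf : StrictMonoOn f S)
    (y : Ordinal) (hy : Ep y ⊆ S) :
    (0 < y ∧ Ordinal.Principal (· + ·) y) ↔
      (0 < subst f y ∧ Ordinal.Principal (· + ·) (subst f y)) :=
  stmt1_general S f hfE hf y hy
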